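/- arXiv:2203.16226 — 5 statements merged into one kernel-verified Lean document; each statement's English description precedes it below -/
import Mathlib

section
/- Let F be a dill map over A^ℕ. Then F induces a well-defined map on the Besicovitch quotient — i.e., for all x, y ∈ A^ℕ, 𝔡_H(x,y) = 0 implies 𝔡_H(F(x),F(y)) = 0 — if and only if F is either a constant function or uniform. -/
/-!
If every block `f u` has the same length `L`, the letter of `F x` at position `t` is read off the
window of `x` at `t / L`, so mismatch densities grow by at most a bounded factor.

Conversely, let `F` respect Besicovitch-null pairs and suppose `f` is not uniform. Then some `x`,
`y` agree from `N` on while their cocycles `S_N x`, `S_N y` differ. Past `S_N y`, `F y` is `F x`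
shifted by `d = S_N x - S_N y`, so `F y` is Besicovitch-close to its own shift by `d`; grafting the
prefixes of `x`, `y` onto an arbitrary `z` gives the same for `F z`. Between periodic words
Besicovitch distance zero means equality, and `F` maps periodic words to periodic words, so every
`F z` is exactly `|d|`-periodic. With this common period, two eventually equal words have images
that agree past their cocycles and hence everywhere; as `(F x) t` depends only on a prefix of `x`,
`F` is constant.
-/

open Filter

/-- The finite factor `x_[i, i+n)` of the infinite word `x`. -/
def factor {A : Type*} (x : ℕ → A) (i n : ℕ) : List A := List.ofFn (fun k : Fin n => x (i + k))

/-- The shift map `σ` on infinite words. -/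
def shift {A : Type*} (x : ℕ → A) : ℕ → A := fun i => x (i + 1)
/-- The Hamming distance between two finite words (number of mismatching positions). -/
def hammingL {A : Type*} [DecidableEq A] (u v : List A) : ℕ :=
  ((List.range (max u.length v.length)).filter (fun i => u[i]? ≠ v[i]?)).length

/-- The Besicovitch pseudometric `𝔡_H`. -/
noncomputable def besic {A : Type*} [DecidableEq A] (x y : ℕ → A) : ℝ :=
  limsup (fun l : ℕ => (hammingL (factor x 0 l) (factor y 0 l) : ℝ) / l) atTop
/-- The window `x_[i, i+s)` of the infinite word `x`, as an element of `A^s`. -/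
def window {A : Type*} (x : ℕ → A) (i : ℕ) (s : ℕ) : Fin s → A := fun k => x (i + k)

/-- The cocycle `S_n(x) = ∑_{j<n} |f(x_[j,j+s))|` of a local rule `f`. -/
def cocycle {A : Type*} {s : ℕ} (f : (Fin s → A) → List A) (x : ℕ → A) (n : ℕ) : ℕ :=
  ∑ j ∈ Finset.range n, (f (window x j s)).length

/-- `F` is the dill map with local rule `f`: for every `x`, `F x` is the infinite
concatenation `f(x_[0,s)) f(x_[1,1+s)) f(x_[2,2+s)) ⋯`. -/
def IsDillVia {A : Type*} {s : ℕ} (f : (Fin s → A) → List A) (F : (ℕ → A) → ℕ → A) : Prop :=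
  ∀ (x : ℕ → A) (n k : ℕ) (h : k < (f (window x n s)).length),
    F x (cocycle f x n + k) = (f (window x n s)).get ⟨k, h⟩

@[simp]
lemma shift_iterate_apply {A : Type*} (x : ℕ → A) (a t : ℕ) : shift^[a] x t = x (t + a) := by
  induction a generalizing x with
  | zero => rfl
  | succ a ih => rw [Function.iterate_succ_apply, ih]; rfl

def splice {A : Type*} (x z : ℕ → A) (C : ℕ) : ℕ → A := fun i => if i < C then x i else z i

section Besicovitch

open Topology

variable {A B : Type*} [DecidableEq A] [DecidableEq B]

def mismatches (x y : ℕ → A) : ℕ → ℕ := Nat.count fun i => x i ≠ y i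

lemma hammingL_factor (x y : ℕ → A) (l : ℕ) :
    hammingL (factor x 0 l) (factor y 0 l) = mismatches x y l := by
  simp only [hammingL, factor, List.length_ofFn, max_self, mismatches,
    Nat.count_eq_card_filter_range]
  rw [Finset.card_def, Finset.filter_val, Finset.range_val, Multiset.range, Multiset.filter_coe,
    Multiset.coe_card]
  congr 1
  refine List.filter_congr fun i hi => ?_
  simp_all

@[simp]
lemma mismatches_self (x : ℕ → A) (l : ℕ) : mismatches x x l = 0 := by
  simp [mismatches]

lemma mismatches_comm (x y : ℕ → A) : mismatches x y = mismatches y x := by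
  unfold mismatches
  congr 1
  ext i
  exact ne_comm

lemma mismatches_le_add (x y z : ℕ → A) (l : ℕ) :
    mismatches x z l ≤ mismatches x y l + mismatches y z l := by
  simp only [mismatches, Nat.count_eq_card_filter_range]
  refine (Finset.card_le_card fun i hi => ?_).trans (Finset.card_union_le _ _)
  by_cases hxy : x i = y i <;> simp_all

lemma mismatches_shift_iterate_le (x y : ℕ → A) (a l : ℕ) :
    mismatches (shift^[a] x) (shift^[a] y) l ≤ mismatches x y l + a :=
  calc mismatches (shift^[a] x) (shift^[a] y) l ≤ mismatches x y (l + a) := by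
        simp only [mismatches, Nat.count_add' _ l a, shift_iterate_apply]; omega
    _ ≤ mismatches x y l + a := by
        rw [mismatches, Nat.count_add]; exact Nat.add_le_add_left (Nat.count_le _) _

lemma besic_eq_limsup (x y : ℕ → A) :
    besic x y = limsup (fun l : ℕ => (mismatches x y l : ℝ) / l) atTop := by
  simp only [besic, hammingL_factor]

lemma besic_comm (x y : ℕ → A) : besic x y = besic y x := by
  rw [besic_eq_limsup, besic_eq_limsup, mismatches_comm]

lemma mismatches_div_mem_Icc (x y : ℕ → A) (l : ℕ) :
    (mismatches x y l : ℝ) / l ∈ Set.Icc 0 1 :=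
  ⟨by positivity, div_le_one_of_le₀ (by exact_mod_cast Nat.count_le _) (Nat.cast_nonneg l)⟩

lemma besic_eq_zero_iff {x y : ℕ → A} :
    besic x y = 0 ↔ Tendsto (fun l : ℕ => (mismatches x y l : ℝ) / l) atTop (𝓝 0) := by
  have hle : IsBoundedUnder (· ≤ ·) atTop fun l : ℕ => (mismatches x y l : ℝ) / l :=
    isBoundedUnder_of ⟨1, fun l => (mismatches_div_mem_Icc x y l).2⟩
  have hge : IsBoundedUnder (· ≥ ·) atTop fun l : ℕ => (mismatches x y l : ℝ) / l :=
    isBoundedUnder_of ⟨0, fun l => (mismatches_div_mem_Icc x y l).1⟩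
  rw [besic_eq_limsup]
  refine ⟨fun h => tendsto_of_le_liminf_of_limsup_le ?_ h.le hle hge, Tendsto.limsup_eq⟩
  exact le_liminf_of_le hle.isCoboundedUnder_ge
    (Eventually.of_forall fun l => (mismatches_div_mem_Icc x y l).1)

lemma besic_eq_zero_of_mismatches_le {x y : ℕ → A} {x' y' : ℕ → B} (h : besic x' y' = 0) {a : ℕ}
    (hle : ∀ l, mismatches x y l ≤ mismatches x' y' l + a) : besic x y = 0 := by
  rw [besic_eq_zero_iff] at h ⊢
  have ha : Tendsto (fun l : ℕ => (a : ℝ) / l) atTop (𝓝 0) :=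
    tendsto_const_div_atTop_nhds_zero_nat _
  refine squeeze_zero (fun l => (mismatches_div_mem_Icc x y l).1) (fun l => ?_)
    (by simpa using h.add ha)
  rw [← add_div]
  gcongr
  exact_mod_cast hle l

lemma besic_self (x : ℕ → A) : besic x x = 0 :=
  besic_eq_zero_iff.2 (by simp)

lemma besic_eq_zero_of_eventuallyEq {x y : ℕ → A} (h : x =ᶠ[atTop] y) : besic x y = 0 := by
  obtain ⟨N, hN⟩ := eventually_atTop.1 h
  refine besic_eq_zero_of_mismatches_le (besic_self x) (a := N) fun l => ?_
  rw [mismatches_self, zero_add, mismatches, Nat.count_eq_card_filter_range]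
  refine (Finset.card_le_card fun i hi => ?_).trans (Finset.card_range N).le
  simp only [Finset.mem_filter, Finset.mem_range] at hi ⊢
  by_contra hiN
  exact hi.2 (hN i (not_lt.1 hiN))

lemma besic_eq_zero_trans {x y z : ℕ → A} (hxy : besic x y = 0) (hyz : besic y z = 0) :
    besic x z = 0 := by
  rw [besic_eq_zero_iff] at hxy hyz ⊢
  refine squeeze_zero (fun l => (mismatches_div_mem_Icc x z l).1) (fun l => ?_)
    (by simpa using hxy.add hyz)
  rw [← add_div]
  gcongr
  exact_mod_cast mismatches_le_add x y z l

lemma besic_shift_iterate_eq_zero {x y : ℕ → A} (h : besic x y = 0) (a : ℕ) :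
    besic (shift^[a] x) (shift^[a] y) = 0 :=
  besic_eq_zero_of_mismatches_le h (mismatches_shift_iterate_le x y a)

lemma le_mismatches_mul_of_periodic {x y : ℕ → A} {L : ℕ} (hx : Function.Periodic x L)
    (hy : Function.Periodic y L) {t : ℕ} (ht : t < L) (hne : x t ≠ y t) (n : ℕ) :
    n ≤ mismatches x y (n * L) := by
  induction n with
  | zero => exact Nat.zero_le _
  | succ n ih =>
    rw [add_one_mul, mismatches, Nat.count_add, ← mismatches]
    have : 0 < Nat.count (fun k => x (n * L + k) ≠ y (n * L + k)) L := by
      refine Nat.pos_of_ne_zero (Nat.count_ne_iff_exists.2 ⟨t, ht, ?_⟩)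
      have hxn := hx.nat_mul n t
      have hyn := hy.nat_mul n t
      simp only [Nat.cast_id] at hxn hyn
      rwa [add_comm, hxn, hyn]
    omega

lemma eq_of_besic_eq_zero_of_periodic {x y : ℕ → A} {L : ℕ} (hL : 0 < L)
    (hx : Function.Periodic x L) (hy : Function.Periodic y L) (h : besic x y = 0) : x = y := by
  by_contra hne
  obtain ⟨t, ht⟩ := Function.ne_iff.1 hne
  rw [← hx.map_mod_nat, ← hy.map_mod_nat] at ht
  have hmul : Tendsto (fun n : ℕ => n * L) atTop atTop :=
    tendsto_id.atTop_mul_const' hL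
  have hlim := (besic_eq_zero_iff.1 h).comp hmul
  have hbound : ∀ᶠ n : ℕ in atTop, (1 : ℝ) / L ≤ (mismatches x y (n * L) : ℝ) / (n * L : ℕ) := by
    filter_upwards [eventually_gt_atTop 0] with n hn
    rw [div_le_div_iff₀ (by positivity) (by positivity)]
    have := le_mismatches_mul_of_periodic hx hy (Nat.mod_lt t hL) ht n
    push_cast
    nlinarith [(Nat.cast_le (α := ℝ)).2 this]
  have hle : (1 : ℝ) / L ≤ 0 := ge_of_tendsto hlim hbound
  have hpos : (0 : ℝ) < 1 / L := by positivity
  linarith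

lemma mismatches_window_le (x y : ℕ → A) (s l : ℕ) :
    mismatches (fun n => window x n s) (fun n => window y n s) l ≤
      ∑ k ∈ Finset.range s, mismatches (shift^[k] x) (shift^[k] y) l := by
  simp only [mismatches, Nat.count_eq_card_filter_range, shift_iterate_apply]
  refine (Finset.card_le_card fun n hn => ?_).trans Finset.card_biUnion_le
  obtain ⟨hnl, hne⟩ := Finset.mem_filter.1 hn
  obtain ⟨k, hk⟩ := Function.ne_iff.1 hne
  exact Finset.mem_biUnion.2 ⟨k, Finset.mem_range.2 k.isLt, Finset.mem_filter.2 ⟨hnl, hk⟩⟩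

lemma besic_window_eq_zero {x y : ℕ → A} (h : besic x y = 0) (s : ℕ) :
    besic (fun n => window x n s) (fun n => window y n s) = 0 := by
  rw [besic_eq_zero_iff]
  have hsum := tendsto_finsetSum (Finset.range s) fun k _ =>
    besic_eq_zero_iff.1 (besic_shift_iterate_eq_zero h k)
  refine squeeze_zero (fun l => (mismatches_div_mem_Icc _ _ l).1) (fun l => ?_)
    (by simpa using hsum)
  rw [← Finset.sum_div]
  gcongr
  exact_mod_cast mismatches_window_le x y s l

lemma mismatches_comp_div_le (a b : ℕ → A) {L : ℕ} (hL : 0 < L) (l : ℕ) :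
    mismatches (fun t => a (t / L)) (fun t => b (t / L)) l ≤ L * mismatches a b (l / L + 1) := by
  simp only [mismatches, Nat.count_eq_card_filter_range]
  refine Finset.card_le_mul_card_image_of_maps_to (f := (· / L)) (fun t ht => ?_) L
    fun n _ => ?_
  · simp only [Finset.mem_filter, Finset.mem_range] at ht ⊢
    exact ⟨Nat.lt_succ_of_le (Nat.div_le_div_right ht.1.le), ht.2⟩
  · refine (Finset.card_le_card fun t ht => ?_).trans
      (by simp : (Finset.Ico (n * L) (n * L + L)).card ≤ L)
    simp only [Finset.mem_filter] at ht
    rw [Finset.mem_Ico, ← ht.2]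
    exact ⟨Nat.div_mul_le_self t L, Nat.lt_div_mul_add hL⟩

lemma besic_eq_zero_of_ne_imp_ne_div {x y : ℕ → A} {a b : ℕ → B} {L : ℕ} (hL : 0 < L)
    (h : ∀ t, x t ≠ y t → a (t / L) ≠ b (t / L)) (hab : besic a b = 0) : besic x y = 0 := by
  have hcount (l : ℕ) : mismatches x y l ≤ L * mismatches a b (l / L + 1) :=
    (Nat.count_mono_left fun t _ => h t).trans (mismatches_comp_div_le a b hL l)
  have hm : Tendsto (fun l => l / L + 1) atTop atTop :=
    (tendsto_add_atTop_nat 1).comp (Nat.tendsto_div_const_atTop hL.ne')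
  rw [besic_eq_zero_iff] at hab ⊢
  refine squeeze_zero' (Eventually.of_forall fun l => (mismatches_div_mem_Icc x y l).1) ?_
    (by simpa using (hab.comp hm).const_mul 2)
  filter_upwards [eventually_ge_atTop L] with l hl
  have hlen : L * (l / L + 1) ≤ 2 * l := by
    have := Nat.mul_div_le l L
    rw [mul_add, mul_one]
    omega
  have hl0 : (0 : ℝ) < l := by exact_mod_cast hL.trans_le hl
  rw [mul_div_assoc', div_le_div_iff₀ hl0 (by positivity)]
  have key : mismatches x y l * (l / L + 1) ≤ 2 * mismatches a b (l / L + 1) * l := by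
    calc mismatches x y l * (l / L + 1) ≤ L * mismatches a b (l / L + 1) * (l / L + 1) :=
          Nat.mul_le_mul_right _ (hcount l)
      _ = mismatches a b (l / L + 1) * (L * (l / L + 1)) := by ring
      _ ≤ mismatches a b (l / L + 1) * (2 * l) := Nat.mul_le_mul_left _ hlen
      _ = 2 * mismatches a b (l / L + 1) * l := by ring
  exact_mod_cast key

end Besicovitch

def BesicWellDefined {A B : Type*} [DecidableEq A] [DecidableEq B] (F : (ℕ → A) → ℕ → B) :
    Prop :=
  ∀ x y, besic x y = 0 → besic (F x) (F y) = 0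

section Cocycle

variable {A : Type*} {s : ℕ} {f : (Fin s → A) → List A}

lemma window_shift_iterate (x : ℕ → A) (p n : ℕ) :
    window (shift^[p] x) n s = window x (p + n) s := by
  funext k
  simp only [window, shift_iterate_apply]
  ring_nf

lemma cocycle_succ (x : ℕ → A) (n : ℕ) :
    cocycle f x (n + 1) = cocycle f x n + (f (window x n s)).length :=
  Finset.sum_range_succ _ n

lemma cocycle_add (x : ℕ → A) (p n : ℕ) :
    cocycle f x (p + n) = cocycle f x p + cocycle f (shift^[p] x) n := by
  simp only [cocycle, Finset.sum_range_add, window_shift_iterate]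

lemma cocycle_congr {x y : ℕ → A} {N : ℕ} (h : ∀ i < N + s, x i = y i) :
    cocycle f x N = cocycle f y N :=
  Finset.sum_congr rfl fun j hj => by
    rw [show window x j s = window y j s from
      funext fun k => h _ (by have := Finset.mem_range.1 hj; omega)]

lemma le_cocycle (hf : ∀ u, f u ≠ []) (x : ℕ → A) (n : ℕ) : n ≤ cocycle f x n := by
  induction n with
  | zero => exact Nat.zero_le _
  | succ n ih =>
    have := List.length_pos_iff.2 (hf (window x n s))
    rw [cocycle_succ]
    omega

lemma exists_eq_cocycle_add (hf : ∀ u, f u ≠ []) (x : ℕ → A) (t : ℕ) :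
    ∃ n k, t = cocycle f x n + k ∧ k < (f (window x n s)).length := by
  induction t with
  | zero => exact ⟨0, 0, rfl, List.length_pos_iff.2 (hf _)⟩
  | succ t ih =>
    obtain ⟨n, k, rfl, hk⟩ := ih
    by_cases h : k + 1 < (f (window x n s)).length
    · exact ⟨n, k + 1, rfl, h⟩
    · refine ⟨n + 1, 0, ?_, List.length_pos_iff.2 (hf _)⟩
      rw [cocycle_succ]
      omega

end Cocycle

namespace IsDillVia

variable {A : Type*} {s : ℕ} {f : (Fin s → A) → List A} {F : (ℕ → A) → ℕ → A}

lemma getElem?_eq (hF : IsDillVia f F) (x : ℕ → A) {n k : ℕ}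
    (hk : k < (f (window x n s)).length) :
    (f (window x n s))[k]? = some (F x (cocycle f x n + k)) := by
  rw [hF x n k hk, List.getElem?_eq_getElem hk, List.get_eq_getElem]

lemma apply_cocycle_add (hF : IsDillVia f F) (hf : ∀ u, f u ≠ []) (x : ℕ → A) (p r : ℕ) :
    F x (cocycle f x p + r) = F (shift^[p] x) r := by
  obtain ⟨n, k, rfl, hk⟩ := exists_eq_cocycle_add hf (shift^[p] x) r
  have hk' : k < (f (window x (p + n) s)).length := by rwa [← window_shift_iterate]
  apply Option.some_injective
  rw [← hF.getElem?_eq _ hk, ← add_assoc, ← cocycle_add, ← hF.getElem?_eq _ hk',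
    window_shift_iterate]

lemma apply_cocycle_add_eq (hF : IsDillVia f F) (hf : ∀ u, f u ≠ []) {x y : ℕ → A} {N : ℕ}
    (hN : ∀ t, N ≤ t → x t = y t) (r : ℕ) :
    F x (cocycle f x N + r) = F y (cocycle f y N + r) := by
  rw [hF.apply_cocycle_add hf, hF.apply_cocycle_add hf]
  congr 1
  funext t
  simp only [shift_iterate_apply]
  exact hN _ (Nat.le_add_left N t)

lemma apply_eq_of_forall_lt (hF : IsDillVia f F) (hf : ∀ u, f u ≠ []) {x y : ℕ → A} {t : ℕ}
    (h : ∀ i < t + s, x i = y i) : F x t = F y t := by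
  obtain ⟨n, k, rfl, hk⟩ := exists_eq_cocycle_add hf x t
  have hn : n ≤ cocycle f x n + k := (le_cocycle hf x n).trans (Nat.le_add_right _ k)
  have hw : window x n s = window y n s := funext fun j => h _ (by omega)
  have hk' : k < (f (window y n s)).length := by rwa [← hw]
  apply Option.some_injective
  rw [← hF.getElem?_eq _ hk, cocycle_congr fun i hi => h i (by omega), ← hF.getElem?_eq _ hk', hw]

lemma periodic (hF : IsDillVia f F) (hf : ∀ u, f u ≠ []) {x : ℕ → A} {L : ℕ}
    (hx : Function.Periodic x L) : Function.Periodic (F x) (cocycle f x L) := by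
  intro t
  rw [add_comm, hF.apply_cocycle_add hf]
  congr 1
  funext i
  simp only [shift_iterate_apply, hx i]

variable [DecidableEq A]

lemma besic_shift_self_eq_zero (hF : IsDillVia f F) (hf : ∀ u, f u ≠ [])
    (hWD : BesicWellDefined F) {x y : ℕ → A} {N : ℕ} (hN : ∀ t, N ≤ t → x t = y t)
    (hle : cocycle f y N ≤ cocycle f x N) :
    besic (F y) (shift^[cocycle f x N - cocycle f y N] (F y)) = 0 := by
  have hxy : besic (F x) (F y) = 0 := hWD x y (besic_eq_zero_of_eventuallyEq
    (eventually_atTop.2 ⟨N, hN⟩))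
  have hshift : besic (F y) (shift^[cocycle f x N - cocycle f y N] (F x)) = 0 := by
    refine besic_eq_zero_of_eventuallyEq (eventually_atTop.2 ⟨cocycle f y N, fun τ hτ => ?_⟩)
    obtain ⟨r, rfl⟩ := Nat.exists_eq_add_of_le hτ
    rw [shift_iterate_apply, ← hF.apply_cocycle_add_eq hf hN]
    congr 1
    omega
  exact besic_eq_zero_trans hshift (besic_shift_iterate_eq_zero hxy _)

lemma besic_shift_eq_zero (hF : IsDillVia f F) (hf : ∀ u, f u ≠ [])
    (hWD : BesicWellDefined F) {x y : ℕ → A} {N : ℕ} (hN : ∀ t, N ≤ t → x t = y t)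
    (hle : cocycle f y N ≤ cocycle f x N) (z : ℕ → A) :
    besic (F z) (shift^[cocycle f x N - cocycle f y N] (F z)) = 0 := by
  -- Graft the prefixes of `x` and `y` onto `z`.
  set x' := splice x z (N + s)
  set y' := splice y z (N + s)
  have hx' : cocycle f x' N = cocycle f x N := cocycle_congr fun i hi => if_pos hi
  have hy' : cocycle f y' N = cocycle f y N := cocycle_congr fun i hi => if_pos hi
  have hN' : ∀ t, N ≤ t → x' t = y' t := fun t ht => by
    simp only [x', y', splice]; split_ifs <;> simp [hN t ht]
  have hzy : besic (F z) (F y') = 0 := hWD z y' (besic_eq_zero_of_eventuallyEq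
    (eventually_atTop.2 ⟨N + s, fun t ht => (if_neg (not_lt.2 ht)).symm⟩))
  have h := hF.besic_shift_self_eq_zero hf hWD hN' (by rwa [hx', hy'])
  rw [hx', hy'] at h
  refine besic_eq_zero_trans hzy (besic_eq_zero_trans h ?_)
  exact besic_shift_iterate_eq_zero ((besic_comm _ _).trans hzy) _

lemma periodic_of_besic_shift_eq_zero (hF : IsDillVia f F) (hf : ∀ u, f u ≠ []) {d : ℕ}
    (h : ∀ z, besic (F z) (shift^[d] (F z)) = 0) (z : ℕ → A) : Function.Periodic (F z) d := by
  intro t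
  -- Compare `F z` with the image of the periodic word repeating a long enough prefix of `z`.
  set K := t + d + s + 1
  set w : ℕ → A := fun i => z (i % K)
  have hw : Function.Periodic w K := (Nat.periodic_mod K).comp z
  have hFw : Function.Periodic (F w) (cocycle f w K) := hF.periodic hf hw
  have hFw' : Function.Periodic (shift^[d] (F w)) (cocycle f w K) := fun i => by
    simp only [shift_iterate_apply, add_right_comm i, hFw _]
  have hwz : ∀ i < t + d + s, w i = z i := fun i hi => congrArg z (Nat.mod_eq_of_lt (by omega))
  have heq := congrFun (eq_of_besic_eq_zero_of_periodic
    ((Nat.succ_pos _).trans_le (le_cocycle hf w K)) hFw hFw' (h w)) t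
  rw [shift_iterate_apply] at heq
  rw [← hF.apply_eq_of_forall_lt hf fun i hi => hwz i (by omega),
    ← hF.apply_eq_of_forall_lt hf fun i hi => hwz i (by omega), heq]

lemma periodic_cocycle_sub (hF : IsDillVia f F) (hf : ∀ u, f u ≠ []) (hWD : BesicWellDefined F)
    {x y : ℕ → A} {N : ℕ} (hN : ∀ t, N ≤ t → x t = y t) (z : ℕ → A) :
    Function.Periodic (F z) (cocycle f x N - cocycle f y N) := by
  rcases le_total (cocycle f y N) (cocycle f x N) with hle | hle
  · exact hF.periodic_of_besic_shift_eq_zero hf (hF.besic_shift_eq_zero hf hWD hN hle) z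
  · simp [Nat.sub_eq_zero_of_le hle]

lemma eq_of_eventuallyEq (hF : IsDillVia f F) (hf : ∀ u, f u ≠ []) (hWD : BesicWellDefined F)
    {κ : ℕ} (hκ : 0 < κ) (hper : ∀ z, Function.Periodic (F z) κ) {x y : ℕ → A} {N : ℕ}
    (hN : ∀ t, N ≤ t → x t = y t) : F x = F y := by
  wlog hle : cocycle f y N ≤ cocycle f x N generalizing x y
  · exact (this (fun t ht => (hN t ht).symm) (le_of_not_ge hle)).symm
  funext t
  -- Move `t` past `cocycle f y N` along the common period `κ`; there `F x` is `F y` shifted.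
  obtain ⟨r, hr⟩ : ∃ r, t + cocycle f y N * κ = cocycle f y N + r :=
    Nat.exists_eq_add_of_le (by nlinarith)
  have hx := hF.periodic_cocycle_sub hf hWD hN x
  calc F x t = F x (t + cocycle f y N * κ + (cocycle f x N - cocycle f y N)) := by
        rw [hx]
        exact ((hper x).nat_mul _ t).symm
    _ = F y (t + cocycle f y N * κ) := by
        rw [hr, ← hF.apply_cocycle_add_eq hf hN]
        congr 1
        omega
    _ = F y t := (hper y).nat_mul _ t

lemma eq_of_periodic (hF : IsDillVia f F) (hf : ∀ u, f u ≠ []) (hWD : BesicWellDefined F)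
    {κ : ℕ} (hκ : 0 < κ) (hper : ∀ z, Function.Periodic (F z) κ) (x y : ℕ → A) : F x = F y := by
  funext t
  calc F x t = F (splice x y (t + s)) t := hF.apply_eq_of_forall_lt hf fun i hi => (if_pos hi).symm
    _ = F y t := congrFun (hF.eq_of_eventuallyEq hf hWD hκ hper (N := t + s)
          fun i hi => if_neg (not_lt.2 hi)) t

end IsDillVia

lemma eq_of_forall_update_eq {ι α β : Type*} [Fintype ι] [DecidableEq ι] {φ : (ι → α) → β}
    (h : ∀ u i a, φ (Function.update u i a) = φ u) (u v : ι → α) : φ u = φ v := by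
  suffices ∀ S : Finset ι, ∀ u, (∀ i ∉ S, u i = v i) → φ u = φ v from
    this Finset.univ u fun i hi => absurd (Finset.mem_univ i) hi
  intro S
  induction S using Finset.induction_on with
  | empty => exact fun u hu => congrArg φ (funext fun i => hu i (Finset.notMem_empty i))
  | insert a S _ ih =>
    intro u hu
    rw [← h u a (v a)]
    refine ih _ fun i hi => ?_
    by_cases hia : i = a
    · rw [hia, Function.update_self]
    · rw [Function.update_of_ne hia]
      exact hu i (by simp [hia, hi])

section Uniform

variable {A : Type*} {s : ℕ} {f : (Fin s → A) → List A}

def extendConst (u : Fin s → A) (a : A) : ℕ → A := fun i => if h : i < s then u ⟨i, h⟩ else a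

lemma window_extendConst (u : Fin s → A) (a : A) : window (extendConst u a) 0 s = u := by
  funext k
  simp [window, extendConst]

lemma length_eq_of_forall_ne_eq
    (h : ∀ x y : ℕ → A, ∀ N, (∀ t, N ≤ t → x t = y t) → cocycle f x N = cocycle f y N)
    (p : ℕ) (hp : p < s) (u v : Fin s → A) (huv : ∀ i : Fin s, (i : ℕ) ≠ p → u i = v i) :
    (f u).length = (f v).length := by
  induction p using Nat.strong_induction_on generalizing u v with
  | _ p ih =>
  set x := extendConst u (u ⟨p, hp⟩)
  set y := extendConst v (u ⟨p, hp⟩)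
  have hxy : ∀ t, t ≠ p → x t = y t := fun t ht => by
    simp only [x, y, extendConst]
    split_ifs with hts
    · exact huv ⟨t, hts⟩ ht
    · rfl
  -- Windows `1, …, p` see the changed letter at a position `< p`; window `0` is `u` resp. `v`.
  have hwin : ∀ j ∈ Finset.range p,
      (f (window x (j + 1) s)).length = (f (window y (j + 1) s)).length := fun j hj => by
    have := Finset.mem_range.1 hj
    exact ih (p - (j + 1)) (by omega) (by omega) _ _ fun i hi => hxy _ (by omega)
  have hN := h x y (p + 1) fun t ht => hxy t (by omega)
  simp only [cocycle, Finset.sum_range_succ', Finset.sum_congr rfl hwin, window_extendConst,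
    x, y] at hN
  omega

lemma length_eq_of_cocycle_eq
    (h : ∀ x y : ℕ → A, ∀ N, (∀ t, N ≤ t → x t = y t) → cocycle f x N = cocycle f y N)
    (u v : Fin s → A) : (f u).length = (f v).length :=
  eq_of_forall_update_eq (φ := fun w => (f w).length) (fun w i a =>
    length_eq_of_forall_ne_eq h i i.isLt _ _ fun _ hj =>
      Function.update_of_ne (fun hji => hj (congrArg Fin.val hji)) a w) u v

lemma IsDillVia.besicWellDefined_of_uniform [DecidableEq A] {F : (ℕ → A) → ℕ → A}
    (hF : IsDillVia f F) (hf : ∀ u, f u ≠ [])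
    (huni : ∀ u v : Fin s → A, (f u).length = (f v).length) : BesicWellDefined F := by
  intro x y hxy
  set L := (f (window x 0 s)).length
  have hL : 0 < L := List.length_pos_iff.2 (hf _)
  have hcocycle (w : ℕ → A) (n : ℕ) : cocycle f w n = n * L := by
    simp only [cocycle, huni _ (window x 0 s), Finset.sum_const, Finset.card_range, smul_eq_mul, L]
  have happly (w : ℕ → A) (t : ℕ) : some (F w t) = (f (window w (t / L) s))[t % L]? := by
    have hk : t % L < (f (window w (t / L) s)).length := huni _ (window x 0 s) ▸ Nat.mod_lt t hL
    rw [hF.getElem?_eq w hk, hcocycle, Nat.div_add_mod']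
  refine besic_eq_zero_of_ne_imp_ne_div hL (fun t hne hw => hne ?_) (besic_window_eq_zero hxy s)
  exact Option.some_injective _ (by rw [happly, happly, hw])

end Uniform

theorem dill_besicovitch_wellDefined_iff_constant_or_uniform_general {A : Type*}
    [DecidableEq A] (s : ℕ)
    (f : (Fin s → A) → List A) (hf : ∀ u, f u ≠ [])
    (F : (ℕ → A) → ℕ → A) (hF : IsDillVia f F) :
    (∀ x y : ℕ → A, besic x y = 0 → besic (F x) (F y) = 0) ↔
      ((∃ c : ℕ → A, ∀ x, F x = c) ∨ ∀ u v : Fin s → A, (f u).length = (f v).length) := by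
  constructor
  · intro hWD
    by_cases huni : ∀ u v : Fin s → A, (f u).length = (f v).length
    · exact Or.inr huni
    obtain ⟨x₀, y₀, N, hN, hne⟩ : ∃ x y : ℕ → A, ∃ N,
        (∀ t, N ≤ t → x t = y t) ∧ cocycle f x N ≠ cocycle f y N := by
      by_contra! h
      exact huni (length_eq_of_cocycle_eq h)
    have hper (z : ℕ → A) := (hF.periodic_cocycle_sub hf hWD hN z).add_period
      (hF.periodic_cocycle_sub hf hWD (fun t ht => (hN t ht).symm) z)
    exact Or.inl ⟨F x₀, fun x => hF.eq_of_periodic hf hWD (by omega) hper x x₀⟩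
  · rintro (⟨c, hc⟩ | huni) x y hxy
    · rw [hc x, hc y]
      exact besic_self c
    · exact hF.besicWellDefined_of_uniform hf huni x y hxy

/-- A dill map `F` is well-defined on the Besicovitch quotient (i.e. `𝔡_H(x,y) = 0`
implies `𝔡_H(F(x),F(y)) = 0`) if and only if `F` is constant or uniform. -/
theorem dill_besicovitch_wellDefined_iff_constant_or_uniform {A : Type*} [Fintype A]
    [DecidableEq A] (s : ℕ) (hs : 1 ≤ s)
    (f : (Fin s → A) → List A) (hf : ∀ u, f u ≠ [])
    (F : (ℕ → A) → ℕ → A) (hF : IsDillVia f F) :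
    (∀ x y : ℕ → A, besic x y = 0 → besic (F x) (F y) = 0) ↔
      ((∃ c : ℕ → A, ∀ x, F x = c) ∨ ∀ u v : Fin s → A, (f u).length = (f v).length) :=
  dill_besicovitch_wellDefined_iff_constant_or_uniform_general s f hf F hF
end

section
/- Let F be a uniform dill map with diameter s, local rule f and common image length |f|, such that s·d_max(f) ≤ |f|. Then for all x, y ∈ A^ℕ and all t ∈ ℕ, 𝔡_H(F^t(x), F^t(y)) ≤ 𝔡_H(x,y). In particular, the induced system on the Besicovitch quotient is equicontinuous. -/
/-!
Cut `F x` into consecutive blocks of length `L`; the `j`-th block is `f` applied to the window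
`x_[j, j+s)`. Among the first `N·L` letters, `F x` and `F y` can only differ inside blocks whose
windows differ, in at most `d_max(f)` places each, and a single mismatch of `x` and `y` lies in at
most `s` windows. Hence the number of mismatches of `F x`, `F y` in `[0, N·L)` is at most
`s·d_max(f) ≤ L` times the number of mismatches of `x`, `y` in `[0, N + s)`; dividing by
`N·L` and letting `N → ∞` gives `𝔡_H(F x, F y) ≤ 𝔡_H(x, y)`. Iterating, every `F^t` is
`1`-Lipschitz, so `δ = ε` witnesses equicontinuity.
-/

open Filter

/-- `d_max(f) = max_{u,v ∈ A^s} d_H(f(u), f(v))`. -/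
noncomputable def dmaxf {A : Type*} [DecidableEq A] {s : ℕ} (f : (Fin s → A) → List A) : ℕ :=
  sSup {d | ∃ u v : Fin s → A, d = hammingL (f u) (f v)}

open Finset


def mismatchCount {A : Type*} [DecidableEq A] (x y : ℕ → A) (n : ℕ) : ℕ :=
  #{i ∈ range n | x i ≠ y i}

section Mismatch

variable {A : Type*} [DecidableEq A]

lemma mismatchCount_mono (x y : ℕ → A) : Monotone (mismatchCount x y) := fun _ _ h =>
  card_le_card (filter_subset_filter _ (range_subset_range.2 h))

lemma mismatchCount_le (x y : ℕ → A) (n : ℕ) : mismatchCount x y n ≤ n :=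
  (card_filter_le _ _).trans (card_range n).le

lemma mismatchCount_add (x y : ℕ → A) (m n : ℕ) :
    mismatchCount x y (m + n)
      = mismatchCount x y m + #{k ∈ range n | x (m + k) ≠ y (m + k)} := by
  simp only [mismatchCount, card_filter, sum_range_add]

lemma card_filter_range_eq_length_filter (p : ℕ → Prop) [DecidablePred p] (n : ℕ) :
    #{i ∈ range n | p i} = ((List.range n).filter (fun i => decide (p i))).length := by
  simp [Finset.range, Finset.filter, Multiset.range]

lemma hammingL_eq_card_filter {u v : List A} {n : ℕ} (hu : u.length = n) (hv : v.length = n) :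
    hammingL u v = #{i ∈ range n | u[i]? ≠ v[i]?} := by
  rw [hammingL, hu, hv, max_self, card_filter_range_eq_length_filter]

lemma hammingL_factor_zero (x y : ℕ → A) (n : ℕ) :
    hammingL (factor x 0 n) (factor y 0 n) = mismatchCount x y n := by
  rw [factor, factor, hammingL_eq_card_filter List.length_ofFn List.length_ofFn, mismatchCount]
  refine congrArg card (filter_congr fun i hi => ?_)
  simp [mem_range.1 hi]

lemma hammingL_le_max_length (u v : List A) : hammingL u v ≤ max u.length v.length :=
  (List.length_filter_le _ _).trans List.length_range.le

lemma hammingL_self (u : List A) : hammingL u u = 0 := by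
  simp [hammingL]

lemma card_window_ne_le (s : ℕ) (x y : ℕ → A) (N : ℕ) :
    #{j ∈ range N | window x j s ≠ window y j s} ≤ mismatchCount x y (N + s) * s := by
  calc #{j ∈ range N | window x j s ≠ window y j s}
      ≤ #({i ∈ range (N + s) | x i ≠ y i}.biUnion fun i => Icc (i + 1 - s) i) := by
        refine card_le_card fun j hj => ?_
        obtain ⟨hjN, hw⟩ := mem_filter.1 hj
        -- a window differing at offset `k` starts in `[i + 1 - s, i]` for the mismatch `i = j + k`
        obtain ⟨k, hk⟩ := Function.ne_iff.1 hw
        have hks := k.2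
        replace hjN := mem_range.1 hjN
        simp only [mem_biUnion, mem_filter, mem_range, mem_Icc]
        exact ⟨j + k, ⟨by omega, hk⟩, by omega, by omega⟩
    _ ≤ mismatchCount x y (N + s) * s :=
        card_biUnion_le_card_mul _ _ _ fun i _ => by rw [Nat.card_Icc]; omega

end Mismatch

section UniformDill

variable {A : Type*} {s L : ℕ} {f : (Fin s → A) → List A} {F : (ℕ → A) → ℕ → A}

lemma IsDillVia.apply_mul_add (hF : IsDillVia f F) (hunif : ∀ u, (f u).length = L)
    (x : ℕ → A) (j : ℕ) {k : ℕ} (hk : k < L) :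
    F x (j * L + k) = (f (window x j s))[k]'((hunif _).symm ▸ hk) := by
  have hS : cocycle f x j = j * L := by simp [cocycle, hunif]
  simpa [hS] using hF x j k ((hunif _).symm ▸ hk)

variable [DecidableEq A]

lemma IsDillVia.card_filter_block_eq_hammingL (hF : IsDillVia f F)
    (hunif : ∀ u, (f u).length = L) (x y : ℕ → A) (j : ℕ) :
    #{k ∈ range L | F x (j * L + k) ≠ F y (j * L + k)}
      = hammingL (f (window x j s)) (f (window y j s)) := by
  rw [hammingL_eq_card_filter (hunif _) (hunif _)]
  refine congrArg card (filter_congr fun k hk => ?_)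
  have hk := mem_range.1 hk
  rw [hF.apply_mul_add hunif x j hk, hF.apply_mul_add hunif y j hk,
    List.getElem?_eq_getElem, List.getElem?_eq_getElem]
  exact (Option.some_injective _).ne_iff.symm

lemma IsDillVia.mismatchCount_mul_eq_sum (hF : IsDillVia f F)
    (hunif : ∀ u, (f u).length = L) (x y : ℕ → A) (N : ℕ) :
    mismatchCount (F x) (F y) (N * L)
      = ∑ j ∈ range N, hammingL (f (window x j s)) (f (window y j s)) := by
  induction N with
  | zero => simp [mismatchCount]
  | succ N ih =>
    rw [sum_range_succ, ← ih, Nat.succ_mul, mismatchCount_add,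
      hF.card_filter_block_eq_hammingL hunif]

lemma hammingL_le_dmaxf (hunif : ∀ u, (f u).length = L) (u v : Fin s → A) :
    hammingL (f u) (f v) ≤ dmaxf f := by
  -- `sSup` of an unbounded set of naturals is `0`; uniformity bounds the set by `L`.
  refine le_csSup ⟨L, ?_⟩ ⟨u, v, rfl⟩
  rintro _ ⟨u', v', rfl⟩
  simpa [hunif] using hammingL_le_max_length (f u') (f v')

lemma IsDillVia.mismatchCount_mul_le (hF : IsDillVia f F) (hunif : ∀ u, (f u).length = L)
    (hcond : s * dmaxf f ≤ L) (x y : ℕ → A) (N : ℕ) :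
    mismatchCount (F x) (F y) (N * L) ≤ L * mismatchCount x y (N + s) := by
  calc mismatchCount (F x) (F y) (N * L)
      = ∑ j ∈ range N, hammingL (f (window x j s)) (f (window y j s)) :=
        hF.mismatchCount_mul_eq_sum hunif x y N
    _ ≤ ∑ j ∈ range N, if window x j s ≠ window y j s then dmaxf f else 0 := by
        gcongr with j
        split_ifs with h
        · exact hammingL_le_dmaxf hunif _ _
        · rw [not_not.1 h, hammingL_self]
    _ = #{j ∈ range N | window x j s ≠ window y j s} * dmaxf f := by
        rw [sum_ite, sum_const_zero, sum_const, smul_eq_mul, add_zero]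
    _ ≤ mismatchCount x y (N + s) * s * dmaxf f := by
        gcongr
        exact card_window_ne_le s x y N
    _ ≤ L * mismatchCount x y (N + s) := by
        rw [mul_assoc, mul_comm]
        gcongr

end UniformDill

section Besicovitch

open Topology

variable {A : Type*} [DecidableEq A]

lemma besic_eq_limsup_mismatchCount (x y : ℕ → A) :
    besic x y = limsup (fun l : ℕ => (mismatchCount x y l : ℝ) / l) atTop := by
  simp only [besic, hammingL_factor_zero]

lemma mismatchCount_div_le_one (x y : ℕ → A) (l : ℕ) :
    (mismatchCount x y l : ℝ) / l ≤ 1 :=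
  div_le_one_of_le₀ (by exact_mod_cast mismatchCount_le x y l) l.cast_nonneg

lemma isBoundedUnder_mismatchCount_div (x y : ℕ → A) :
    IsBoundedUnder (· ≤ ·) atTop (fun l : ℕ => (mismatchCount x y l : ℝ) / l) :=
  isBoundedUnder_of ⟨1, mismatchCount_div_le_one x y⟩

lemma isCoboundedUnder_mismatchCount_div (x y : ℕ → A) :
    IsCoboundedUnder (· ≤ ·) atTop (fun l : ℕ => (mismatchCount x y l : ℝ) / l) :=
  isCoboundedUnder_le_of_le atTop fun _ => by positivity

lemma besic_nonneg (x y : ℕ → A) : 0 ≤ besic x y := by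
  rw [besic_eq_limsup_mismatchCount]
  exact le_limsup_of_frequently_le (Frequently.of_forall fun _ => by positivity)
    (isBoundedUnder_mismatchCount_div x y)

lemma eventually_mismatchCount_le_of_besic_lt {x y : ℕ → A} {c : ℝ} (hc : besic x y < c) :
    ∀ᶠ n : ℕ in atTop, (mismatchCount x y n : ℝ) ≤ c * n := by
  rw [besic_eq_limsup_mismatchCount] at hc
  filter_upwards [eventually_lt_of_limsup_lt hc (isBoundedUnder_mismatchCount_div x y),
    eventually_gt_atTop 0] with n hn hn0
  exact ((div_lt_iff₀ (by exact_mod_cast hn0)).1 hn).le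

lemma besic_le_of_eventually_mismatchCount_le {x y : ℕ → A} {c K : ℝ}
    (h : ∀ᶠ n : ℕ in atTop, (mismatchCount x y n : ℝ) ≤ c * n + K) : besic x y ≤ c := by
  have hlim : Tendsto (fun n : ℕ => c + K / n) atTop (𝓝 c) := by
    simpa using (tendsto_const_div_atTop_nhds_zero_nat K).const_add c
  rw [besic_eq_limsup_mismatchCount, ← hlim.limsup_eq]
  refine limsup_le_limsup ?_ (isCoboundedUnder_mismatchCount_div x y) hlim.isBoundedUnder_le
  filter_upwards [h, eventually_gt_atTop 0] with n hn hn0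
  have hn0 : (0 : ℝ) < n := by exact_mod_cast hn0
  rw [div_le_iff₀ hn0, add_mul, div_mul_cancel₀ _ hn0.ne']
  linarith

lemma besic_le_of_mismatchCount_mul_le {x y x' y' : ℕ → A} {s L : ℕ} (hL : 0 < L)
    (h : ∀ N, mismatchCount x' y' (N * L) ≤ L * mismatchCount x y (N + s)) :
    besic x' y' ≤ besic x y := by
  refine le_of_forall_gt_imp_ge_of_dense fun c hc => ?_
  have hc0 : 0 ≤ c := (besic_nonneg x y).trans hc.le
  obtain ⟨n₀, hn₀⟩ := eventually_atTop.1 (eventually_mismatchCount_le_of_besic_lt hc)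
  refine besic_le_of_eventually_mismatchCount_le (K := c * (L * (s + 1))) ?_
  filter_upwards [eventually_ge_atTop (n₀ * L)] with l hl
  set N := l / L + 1
  have hlN : l ≤ N * L := by simpa [N, add_mul] using (Nat.lt_div_mul_add hL).le
  have hNL : ((N * L : ℕ) : ℝ) ≤ l + L := by
    exact_mod_cast (by simpa [N, add_mul] using Nat.div_mul_le_self l L : N * L ≤ l + L)
  have hN : n₀ ≤ N + s := by
    have := (Nat.le_div_iff_mul_le hL).2 hl
    omega
  calc (mismatchCount x' y' l : ℝ)
      ≤ mismatchCount x' y' (N * L) := by exact_mod_cast mismatchCount_mono x' y' hlN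
    _ ≤ L * mismatchCount x y (N + s) := by exact_mod_cast h N
    _ ≤ L * (c * (N + s : ℕ)) := by gcongr; exact hn₀ _ hN
    _ ≤ c * l + c * (L * (s + 1)) := by
        push_cast at hNL ⊢
        nlinarith [mul_le_mul_of_nonneg_left hNL hc0]

end Besicovitch

lemma iterate_le_of_forall_apply_le {α : Type*} {d : α → α → ℝ} {F : α → α}
    (h : ∀ x y, d (F x) (F y) ≤ d x y) (t : ℕ) (x y : α) :
    d (F^[t] x) (F^[t] y) ≤ d x y := by
  induction t generalizing x y with
  | zero => rfl
  | succ t ih => simpa only [Function.iterate_succ_apply] using (ih (F x) (F y)).trans (h x y)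

theorem uniform_dill_besicovitch_equicontinuous_general {A : Type*} [DecidableEq A]
    (s L : ℕ) (hL : 1 ≤ L)
    (f : (Fin s → A) → List A) (hunif : ∀ u, (f u).length = L)
    (hcond : s * dmaxf f ≤ L)
    (F : (ℕ → A) → ℕ → A) (hF : IsDillVia f F) :
    (∀ (x y : ℕ → A) (t : ℕ), besic (F^[t] x) (F^[t] y) ≤ besic x y) ∧
      (∀ ε : ℝ, 0 < ε → ∃ δ : ℝ, 0 < δ ∧
        ∀ x y : ℕ → A, besic x y < δ → ∀ t : ℕ, besic (F^[t] x) (F^[t] y) < ε) := by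
  have lipschitz : ∀ (x y : ℕ → A) (t : ℕ), besic (F^[t] x) (F^[t] y) ≤ besic x y :=
    fun x y t => iterate_le_of_forall_apply_le (fun x y =>
      besic_le_of_mismatchCount_mul_le hL (hF.mismatchCount_mul_le hunif hcond x y)) t x y
  exact ⟨lipschitz, fun ε hε =>
    ⟨ε, hε, fun x y hxy t => (lipschitz x y t).trans_lt hxy⟩⟩

/-- If `F` is a uniform dill map with diameter `s`, local rule `f`, common image length `L`,
and `s·d_max(f) ≤ L`, then all iterates `F^t` are `1`-Lipschitz for `𝔡_H`; in particular the
induced system on the Besicovitch quotient is equicontinuous. -/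
theorem uniform_dill_besicovitch_equicontinuous {A : Type*} [Fintype A] [DecidableEq A]
    (s L : ℕ) (hs : 1 ≤ s) (hL : 1 ≤ L)
    (f : (Fin s → A) → List A) (hunif : ∀ u, (f u).length = L)
    (hcond : s * dmaxf f ≤ L)
    (F : (ℕ → A) → ℕ → A) (hF : IsDillVia f F) :
    (∀ (x y : ℕ → A) (t : ℕ), besic (F^[t] x) (F^[t] y) ≤ besic x y) ∧
      (∀ ε : ℝ, 0 < ε → ∃ δ : ℝ, 0 < δ ∧
        ∀ x y : ℕ → A, besic x y < δ → ∀ t : ℕ, besic (F^[t] x) (F^[t] y) < ε) :=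
  uniform_dill_besicovitch_equicontinuous_general s L hL f hunif hcond F hF
end

section
/- For every x, y ∈ A^ℕ, if 𝔡_L(x,y) = 0 then for every p ∈ ℕ there exist i, j ∈ ℕ such that x_[i,i+p) = y_[j,j+p); i.e., x and y have a common factor of every length. -/
open Filter

/-- The maximal length of a common (not necessarily contiguous) subsequence of `u` and `v`. -/
noncomputable def lcs {A : Type*} (u v : List A) : ℕ :=
  sSup {n | ∃ w : List A, w.length = n ∧ w.Sublist u ∧ w.Sublist v}

/-- The (halved) Levenshtein distance `d_L(u,v) = (|u|+|v|)/2 - ℓ(u,v)`. -/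
noncomputable def levD {A : Type*} (u v : List A) : ℝ :=
  ((u.length : ℝ) + v.length) / 2 - lcs u v

/-- The Feldman pseudometric `𝔡_L`. -/
noncomputable def feld {A : Type*} (x y : ℕ → A) : ℝ :=
  limsup (fun l : ℕ => levD (factor x 0 l) (factor y 0 l) / l) atTop

/-! If `𝔡_L(x, y) = 0`, then for large `ℓ` the prefixes of length `ℓ` of `x` and `y` have a common
subsequence `w` whose length `m` satisfies `ℓ - m ≪ ℓ`. Cut `w` into blocks of length `p`: a block
that does not occur contiguously in the prefix of `x` skips a letter of it, so at most `ℓ - m`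
blocks fail for `x`, and likewise for `y`. Since `m / p > 2 (ℓ - m)`, some block occurs
contiguously in both prefixes, which is a common factor of length `p`. -/

open List

@[simp]
theorem length_factor {A : Type*} (x : ℕ → A) (i n : ℕ) : (factor x i n).length = n := by
  simp [factor]

theorem exists_eq_factor_of_infix_factor {A : Type*} {x : ℕ → A} {i n : ℕ} {b : List A}
    (hb : b <:+: factor x i n) : ∃ j, b = factor x j b.length := by
  obtain ⟨k, -, hk⟩ := infix_iff_getElem?.mp hb
  refine ⟨i + k, ext_getElem (length_factor _ _ _).symm fun d hd _ => ?_⟩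
  have hd := hk d hd
  simp only [factor, List.getElem?_ofFn, dite_eq_ite, Option.ite_none_right_eq_some,
    Option.some.injEq, List.getElem_ofFn] at hd ⊢
  rw [← hd.2]
  congr 1
  omega

theorem exists_length_eq_lcs {A : Type*} (u v : List A) :
    ∃ w : List A, w.length = lcs u v ∧ w <+ u ∧ w <+ v := by
  refine Nat.sSup_mem (s := {n | ∃ w : List A, w.length = n ∧ w <+ u ∧ w <+ v})
    ⟨0, [], rfl, nil_sublist u, nil_sublist v⟩ ⟨u.length, ?_⟩
  rintro n ⟨w, rfl, hwu, -⟩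
  exact hwu.length_le

theorem levD_factor {A : Type*} (x y : ℕ → A) (i j l : ℕ) :
    levD (factor x i l) (factor y j l) = l - lcs (factor x i l) (factor y j l) := by
  rw [levD, length_factor, length_factor]
  ring

theorem eventually_sub_lcs_lt_of_feld_eq_zero {A : Type*} {x y : ℕ → A} (h : feld x y = 0)
    {ε : ℝ} (hε : 0 < ε) :
    ∀ᶠ l : ℕ in atTop, (l : ℝ) - lcs (factor x 0 l) (factor y 0 l) < ε * l := by
  have hbdd : IsBoundedUnder (· ≤ ·) atTop
      (fun l : ℕ => levD (factor x 0 l) (factor y 0 l) / l) := by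
    refine isBoundedUnder_of ⟨1, fun l => div_le_one_of_le₀ ?_ l.cast_nonneg⟩
    rw [levD_factor]
    linarith [(lcs (factor x 0 l) (factor y 0 l)).cast_nonneg (α := ℝ)]
  filter_upwards [eventually_lt_of_limsup_lt (h.trans_lt hε) hbdd, eventually_gt_atTop 0]
    with l hl hl0
  rwa [levD_factor, div_lt_iff₀ (by exact_mod_cast hl0)] at hl

theorem exists_common_infix_of_sublist {A : Type*} {u v w : List A} (p : ℕ)
    (hu : w <+ u) (hv : w <+ v)
    (hlen : p * (u.length + v.length + 1) ≤ (2 * p + 1) * w.length) :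
    ∃ b : List A, b.length = p ∧ b <:+: u ∧ b <:+: v := by
  induction hn : u.length + v.length using Nat.strong_induction_on generalizing u v w with
  | _ n ih =>
  subst hn
  have hpw : p ≤ w.length := by
    have := hu.length_le; have := hv.length_le; nlinarith
  obtain ⟨c, u', rfl, hbc, hu'⟩ := append_sublist_iff.mp ((take_append_drop p w).symm ▸ hu)
  obtain ⟨d, v', rfl, hbd, hv'⟩ := append_sublist_iff.mp ((take_append_drop p w).symm ▸ hv)
  have hb : (w.take p).length = p := length_take_of_le hpw
  by_cases hinf : w.take p <:+: c ∧ w.take p <:+: d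
  · exact ⟨w.take p, hb, hinf.1.trans infix_append_left, hinf.2.trans infix_append_left⟩
  -- a first block that is not contiguous in `c` or in `d` leaves an unmatched letter there
  have hcd : 2 * p + 1 ≤ c.length + d.length := by
    have := hbc.length_le
    have := hbd.length_le
    by_contra! hcd
    exact hinf ⟨hbc.eq_of_length_le (by omega) ▸ infix_refl _,
      hbd.eq_of_length_le (by omega) ▸ infix_refl _⟩
  have hlen' : p * (u'.length + v'.length + 1) ≤ (2 * p + 1) * (w.drop p).length := by
    have := Nat.mul_le_mul_left p hcd
    simp only [length_append, length_drop] at hlen ⊢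
    zify [hpw] at hlen this ⊢
    linarith
  obtain ⟨b, hbl, hbu, hbv⟩ :=
    ih (u'.length + v'.length) (by simp only [length_append]; omega) hu' hv' hlen' rfl
  exact ⟨b, hbl, hbu.trans infix_append_right, hbv.trans infix_append_right⟩

/-- If `𝔡_L(x,y) = 0` then `x` and `y` have a common factor of every length. -/
theorem feld_zero_common_factor {A : Type*} (x y : ℕ → A) (h : feld x y = 0) :
    ∀ p : ℕ, ∃ i j : ℕ, factor x i p = factor y j p := by
  intro p
  have hε : (0 : ℝ) < 1 / (2 * (2 * p + 1)) := by positivity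
  obtain ⟨l, hl, hlp⟩ :=
    ((eventually_sub_lcs_lt_of_feld_eq_zero h hε).and (eventually_ge_atTop (2 * p))).exists
  obtain ⟨w, hwl, hwx, hwy⟩ := exists_length_eq_lcs (factor x 0 l) (factor y 0 l)
  have hlen :
      p * ((factor x 0 l).length + (factor y 0 l).length + 1) ≤ (2 * p + 1) * w.length := by
    rw [length_factor, length_factor, hwl]
    have hlp' : (2 * p : ℝ) ≤ l := by exact_mod_cast hlp
    rw [div_mul_eq_mul_div, one_mul, lt_div_iff₀ (by positivity)] at hl
    have : (p : ℝ) * (l + l + 1) ≤ (2 * p + 1) * lcs (factor x 0 l) (factor y 0 l) := by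
      nlinarith
    exact_mod_cast this
  obtain ⟨b, rfl, hbx, hby⟩ := exists_common_infix_of_sublist p hwx hwy hlen
  obtain ⟨i, hi⟩ := exists_eq_factor_of_infix_factor hbx
  obtain ⟨j, hj⟩ := exists_eq_factor_of_infix_factor hby
  exact ⟨i, j, hi.symm.trans hj⟩
end

section
/- Let f : A^s → A^+ be the local rule of a dill map and M, M' ∈ ℕ be such that for every finite word u and every position j < |u|: d_L(f^*(D_j(u)), f^*(u)) ≤ M + (|f^*(u)| − |f^*(D_j(u))|)/2 and d_L(f^*(D_j(u)), f^*(u)) ≤ M' − (|f^*(u)| − |f^*(D_j(u))|)/2. Then for every l ∈ ℕ and all words u, v of length l: d_L(f^*(u), f^*(v)) ≤ (M + M')·d_L(u,v) − | |f^*(u)| − |f^*(v)| |/2. -/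
open Filter

/-- The window `u_[i, i+s)` of the finite word `u`. -/
def listWindow {A : Type*} [Inhabited A] (u : List A) (i : ℕ) (s : ℕ) : Fin s → A :=
  fun k => u.getD (i + k) default

/-- The extension `f^*` of a local rule `f` to finite words:
`f^*(u) = f(u_[0,s)) ⋯ f(u_[|u|-s,|u|))` when `|u| ≥ s`, and the empty word otherwise. -/
def fstar {A : Type*} [Inhabited A] {s : ℕ} (f : (Fin s → A) → List A) (u : List A) : List A :=
  ((List.range (u.length + 1 - s)).map (fun i => f (listWindow u i s))).flatten

/-!
Let `w` be a longest common subsequence of `u` and `v`, so that `u` and `v` each arise from `w`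
by `k = d_L(u,v)` insertions. Along such a chain of single deletions from `u` down to `w`, the two
hypotheses telescope to `d_L(f^*(w), f^*(u)) ≤ kM + (|f^*(u)| - |f^*(w)|)/2` and
`d_L(f^*(w), f^*(u)) ≤ kM' - (|f^*(u)| - |f^*(w)|)/2`, and likewise for `v`. Adding the first
bound for one word and the second for the other, and using the triangle inequality for `d_L`
through `f^*(w)`, gives the claim.
-/

namespace List

variable {A : Type*}

theorem Sublist.exists_sublist_eraseIdx {w u : List A} (h : w <+ u) (hlt : w.length < u.length) :
    ∃ j < u.length, w <+ u.eraseIdx j := by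
  induction h with
  | slnil => simp at hlt
  | cons a h _ => exact ⟨0, by simp, by simpa using h⟩
  | cons_cons a _ ih =>
    obtain ⟨j, hj, hsub⟩ := ih (by simpa using hlt)
    exact ⟨j + 1, by simpa using hj, by simpa using hsub.cons_cons a⟩

theorem exists_common_sublist_of_sublist :
    ∀ {v p q : List A}, p <+ v → q <+ v →
      ∃ r : List A, r <+ p ∧ r <+ q ∧ p.length + q.length ≤ v.length + r.length
  | [], _, _, hp, hq => by
    rw [sublist_nil.mp hp, sublist_nil.mp hq]
    exact ⟨[], Sublist.slnil, Sublist.slnil, le_rfl⟩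
  | a :: v, p, q, hp, hq => by
    rcases sublist_cons_iff.mp hp with hp' | ⟨p, rfl, hp'⟩ <;>
      rcases sublist_cons_iff.mp hq with hq' | ⟨q, rfl, hq'⟩ <;>
      obtain ⟨r, hrp, hrq, hlen⟩ := exists_common_sublist_of_sublist hp' hq'
    · exact ⟨r, hrp, hrq, by simp; omega⟩
    · exact ⟨r, hrp, hrq.cons a, by simp; omega⟩
    · exact ⟨r, hrp.cons a, hrq, by simp; omega⟩
    · exact ⟨a :: r, hrp.cons_cons a, hrq.cons_cons a, by simp; omega⟩

end List

section Levenshtein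

variable {A B : Type*}

theorem lcs_bddAbove (u v : List A) :
    BddAbove {n | ∃ w : List A, w.length = n ∧ w.Sublist u ∧ w.Sublist v} :=
  ⟨u.length, fun _ ⟨_, hw, hu, _⟩ => hw ▸ hu.length_le⟩

theorem exists_sublist_length_eq_lcs (u v : List A) :
    ∃ w : List A, w.length = lcs u v ∧ w.Sublist u ∧ w.Sublist v := by
  refine Nat.sSup_mem ?_ (lcs_bddAbove u v)
  exact ⟨0, [], rfl, u.nil_sublist, v.nil_sublist⟩

theorem length_le_lcs {u v w : List A} (hu : w.Sublist u) (hv : w.Sublist v) :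
    w.length ≤ lcs u v :=
  le_csSup (lcs_bddAbove u v) ⟨w, rfl, hu, hv⟩

theorem lcs_comm (u v : List A) : lcs u v = lcs v u := by
  unfold lcs
  simp only [and_comm (a := List.Sublist _ u)]

theorem levD_comm (u v : List A) : levD u v = levD v u := by
  unfold levD
  rw [lcs_comm, add_comm]

theorem lcs_self (u : List A) : lcs u u = u.length := by
  obtain ⟨w, hw, hwu, -⟩ := exists_sublist_length_eq_lcs u u
  exact le_antisymm (hw ▸ hwu.length_le) (length_le_lcs (.refl u) (.refl u))

theorem levD_self (u : List A) : levD u u = 0 := by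
  rw [levD, lcs_self]
  ring

theorem lcs_add_lcs_le (u v w : List A) : lcs u v + lcs v w ≤ v.length + lcs u w := by
  obtain ⟨p, hp, hpu, hpv⟩ := exists_sublist_length_eq_lcs u v
  obtain ⟨q, hq, hqv, hqw⟩ := exists_sublist_length_eq_lcs v w
  obtain ⟨r, hrp, hrq, hlen⟩ := List.exists_common_sublist_of_sublist hpv hqv
  have := length_le_lcs (hrp.trans hpu) (hrq.trans hqw)
  omega

theorem levD_triangle (u v w : List A) : levD u w ≤ levD u v + levD v w := by
  have : (lcs u v : ℝ) + lcs v w ≤ v.length + lcs u w := by exact_mod_cast lcs_add_lcs_le u v w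
  unfold levD
  linarith

theorem levD_eq_of_length_eq {u v : List A} (h : u.length = v.length) :
    levD u v = u.length - lcs u v := by
  rw [levD, h]
  ring

theorem levD_map_le_of_sublist {F : List A → List B} {φ : List A → ℝ} {M : ℝ}
    (hF : ∀ (u : List A) (j : ℕ), j < u.length →
      levD (F (u.eraseIdx j)) (F u) ≤ M + (φ u - φ (u.eraseIdx j)))
    ⦃w u : List A⦄ (hwu : w.Sublist u) :
    levD (F w) (F u) ≤ ((u.length : ℝ) - w.length) * M + (φ u - φ w) := by
  rcases hwu.length_le.eq_or_lt with heq | hlt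
  · rw [hwu.eq_of_length heq, levD_self]
    simp
  · obtain ⟨j, hj, hwj⟩ := hwu.exists_sublist_eraseIdx hlt
    have ih := levD_map_le_of_sublist hF hwj
    rw [List.length_eraseIdx_of_lt hj, Nat.cast_sub (by omega)] at ih
    have := levD_triangle (F w) (F (u.eraseIdx j)) (F u)
    have := hF u j hj
    push_cast at ih
    linarith
termination_by u.length
decreasing_by rw [List.length_eraseIdx_of_lt hj]; omega

end Levenshtein

theorem fstar_levD_bound_general {A : Type*} [Inhabited A] (s : ℕ)
    (f : (Fin s → A) → List A) (M M' : ℕ)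
    (h1 : ∀ (u : List A) (j : ℕ), j < u.length →
      levD (fstar f (u.eraseIdx j)) (fstar f u) ≤
        (M : ℝ) + (((fstar f u).length : ℝ) - ((fstar f (u.eraseIdx j)).length : ℝ)) / 2)
    (h2 : ∀ (u : List A) (j : ℕ), j < u.length →
      levD (fstar f (u.eraseIdx j)) (fstar f u) ≤
        (M' : ℝ) - (((fstar f u).length : ℝ) - ((fstar f (u.eraseIdx j)).length : ℝ)) / 2) :
    ∀ (l : ℕ) (u v : List A), u.length = l → v.length = l →
      levD (fstar f u) (fstar f v) ≤
        ((M : ℝ) + (M' : ℝ)) * levD u v -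
          |((fstar f u).length : ℝ) - ((fstar f v).length : ℝ)| / 2 := by
  intro l u v hu hv
  obtain ⟨w, hw, hwu, hwv⟩ := exists_sublist_length_eq_lcs u v
  have hM := levD_map_le_of_sublist (F := fstar f) (φ := fun x => ((fstar f x).length : ℝ) / 2)
    (fun u j hj => (h1 u j hj).trans_eq (by ring))
  have hM' :=
    levD_map_le_of_sublist (F := fstar f) (φ := fun x => -((fstar f x).length : ℝ) / 2)
    (fun u j hj => (h2 u j hj).trans_eq (by ring))
  have hu₁ := hM hwu
  have hu₂ := hM' hwu
  have hv₁ := hM hwv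
  have hv₂ := hM' hwv
  rw [hu] at hu₁ hu₂
  rw [hv] at hv₁ hv₂
  have htri := levD_triangle (fstar f u) (fstar f w) (fstar f v)
  rw [levD_comm (fstar f u) (fstar f w)] at htri
  rw [levD_eq_of_length_eq (hu.trans hv.symm), ← hw, hu]
  rcases abs_cases (((fstar f u).length : ℝ) - (fstar f v).length) with
    ⟨he, -⟩ | ⟨he, -⟩ <;> rw [he] <;> linarith

/-- If each single deletion changes `f^*` by at most `M + (|f^*(u)| - |f^*(D_j(u))|)/2`
and at most `M' - (|f^*(u)| - |f^*(D_j(u))|)/2` (in Levenshtein distance), then for all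
words `u, v` of the same length,
`d_L(f^*(u), f^*(v)) ≤ (M+M')·d_L(u,v) - ||f^*(u)| - |f^*(v)||/2`. -/
theorem fstar_levD_bound {A : Type*} [Inhabited A] (s : ℕ) (hs : 1 ≤ s)
    (f : (Fin s → A) → List A) (hf : ∀ u, f u ≠ []) (M M' : ℕ)
    (h1 : ∀ (u : List A) (j : ℕ), j < u.length →
      levD (fstar f (u.eraseIdx j)) (fstar f u) ≤
        (M : ℝ) + (((fstar f u).length : ℝ) - ((fstar f (u.eraseIdx j)).length : ℝ)) / 2)
    (h2 : ∀ (u : List A) (j : ℕ), j < u.length →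
      levD (fstar f (u.eraseIdx j)) (fstar f u) ≤
        (M' : ℝ) - (((fstar f u).length : ℝ) - ((fstar f (u.eraseIdx j)).length : ℝ)) / 2) :
    ∀ (l : ℕ) (u v : List A), u.length = l → v.length = l →
      levD (fstar f u) (fstar f v) ≤
        ((M : ℝ) + (M' : ℝ)) * levD u v -
          |((fstar f u).length : ℝ) - ((fstar f v).length : ℝ)| / 2 :=
  fstar_levD_bound_general s f M M' h1 h2
end

section
/- There is no expansive cellular automaton over the Feldman space on the binary alphabet: for every cellular automaton F over {0,1}^ℕ and every ε > 0, there exist x, y ∈ {0,1}^ℕ with 𝔡_L(x,y) > 0 such that 𝔡_L(F^t(x), F^t(y)) ≤ ε for every t ∈ ℕ. -/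
open Filter

/-! Take `x = 0^ω` and `y` the indicator of the blocks `[(M+1)·4ⁿ, (M+2)·4ⁿ)`. Every common
subsequence of `0^ℓ` and `y_[0,ℓ)` avoids the ones of `y`, so `𝔡_L(x, y) ≥ 1/(M+2)`. On the other
hand `F^t` only looks `r = t(s-1)` cells to the right, so `F^t x` and `F^t y` can differ only at
positions at most `r` to the left of a one of `y`. Outside the prefix `[0, (M+2)r)` these positions
lie in the wider blocks `[M·4ⁿ, (M+2)·4ⁿ)`, of upper density at most `4/M`, and the Levenshtein
distance is bounded by the Hamming distance. -/

open Finset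

section Levenshtein

variable {A : Type*}

lemma lcs_le {u v : List A} {m : ℕ}
    (h : ∀ w : List A, w.Sublist u → w.Sublist v → w.length ≤ m) : lcs u v ≤ m :=
  csSup_le ⟨0, [], rfl, List.nil_sublist u, List.nil_sublist v⟩
    fun _ ⟨w, hw, hwu, hwv⟩ => hw ▸ h w hwu hwv

lemma le_lcs {u v w : List A} (hwu : w.Sublist u) (hwv : w.Sublist v) : w.length ≤ lcs u v :=
  le_csSup ⟨u.length, fun _ ⟨_, hw, hwu, _⟩ => hw ▸ hwu.length_le⟩ ⟨w, rfl, hwu, hwv⟩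

lemma factor_zero_eq_map (x : ℕ → A) (l : ℕ) : factor x 0 l = (List.range l).map x :=
  List.ext_getElem (by simp [factor]) fun _ _ _ => by simp [factor]

lemma levD_factor_zero (x y : ℕ → A) (l : ℕ) :
    levD (factor x 0 l) (factor y 0 l) = l - lcs (factor x 0 l) (factor y 0 l) := by
  simp only [levD, factor, List.length_ofFn]
  ring

lemma levD_factor_zero_nonneg (x y : ℕ → A) (l : ℕ) :
    0 ≤ levD (factor x 0 l) (factor y 0 l) := by
  have : lcs (factor x 0 l) (factor y 0 l) ≤ l :=
    lcs_le fun _ hwu _ => by simpa [factor] using hwu.length_le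
  rw [levD_factor_zero, sub_nonneg]
  exact_mod_cast this

lemma levD_factor_zero_le (x y : ℕ → A) (l : ℕ) : levD (factor x 0 l) (factor y 0 l) ≤ l := by
  rw [levD_factor_zero]
  linarith [(lcs (factor x 0 l) (factor y 0 l)).cast_nonneg (α := ℝ)]

variable [DecidableEq A]

lemma levD_factor_zero_le_card_ne (x y : ℕ → A) (l : ℕ) :
    levD (factor x 0 l) (factor y 0 l) ≤ #{i ∈ range l | x i ≠ y i} := by
  let agree := (List.range l).filter (fun i => x i = y i)
  have hmap : agree.map x = agree.map y :=
    List.map_congr_left fun _ hi => of_decide_eq_true (List.mem_filter.1 hi).2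
  have hsub (z : ℕ → A) : (agree.map z).Sublist (factor z 0 l) := by
    rw [factor_zero_eq_map]
    exact List.filter_sublist.map z
  have hagree : (#{i ∈ range l | x i = y i} : ℝ) ≤ lcs (factor x 0 l) (factor y 0 l) := by
    have := le_lcs (hsub x) (hmap ▸ hsub y)
    rw [List.length_map] at this
    exact_mod_cast this
  have hsplit : (#{i ∈ range l | x i = y i} : ℝ) + #{i ∈ range l | x i ≠ y i} = l := by
    exact_mod_cast card_range l ▸ card_filter_add_card_filter_not (fun i => x i = y i)
  rw [levD_factor_zero]
  linarith

lemma card_ne_le_levD_const_factor_zero (a : A) (y : ℕ → A) (l : ℕ) :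
    (#{i ∈ range l | y i ≠ a} : ℝ) ≤ levD (factor (fun _ => a) 0 l) (factor y 0 l) := by
  have hlcs : lcs (factor (fun _ => a) 0 l) (factor y 0 l) ≤ #{i ∈ range l | y i = a} := by
    refine lcs_le fun w hwa hwy => ?_
    rw [factor_zero_eq_map, List.map_const', List.length_range] at hwa
    obtain ⟨k, -, rfl⟩ := List.sublist_replicate_iff.1 hwa
    have := hwy.count_le a
    rw [List.count_replicate_self, factor_zero_eq_map, List.count_eq_countP,
      List.countP_map, List.countP_eq_length_filter] at this
    rw [List.length_replicate]
    exact this.trans_eq rfl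
  have hsplit : (#{i ∈ range l | y i = a} : ℝ) + #{i ∈ range l | y i ≠ a} = l := by
    exact_mod_cast card_range l ▸ card_filter_add_card_filter_not (fun i => y i = a)
  rw [levD_factor_zero]
  linarith [(Nat.cast_le (α := ℝ)).2 hlcs]

end Levenshtein

section Feldman

variable {A : Type*} [DecidableEq A]

lemma feld_le_of_eventually_card_ne_le {x y : ℕ → A} {ε : ℝ}
    (h : ∀ᶠ l : ℕ in atTop, (#{i ∈ range l | x i ≠ y i} : ℝ) ≤ ε * l) : feld x y ≤ ε := by
  have hcobdd : IsCoboundedUnder (· ≤ ·) atTop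
      fun l : ℕ => levD (factor x 0 l) (factor y 0 l) / l :=
    (isBoundedUnder_of ⟨0, fun l => div_nonneg (levD_factor_zero_nonneg x y l) l.cast_nonneg⟩
      : IsBoundedUnder (· ≥ ·) atTop _).isCoboundedUnder_le
  refine limsup_le_of_le hcobdd ((h.and (eventually_gt_atTop 0)).mono fun l ⟨hl, hl0⟩ => ?_)
  rw [div_le_iff₀ (by exact_mod_cast hl0)]
  exact (levD_factor_zero_le_card_ne x y l).trans hl

lemma le_feld_const_of_frequently {a : A} {y : ℕ → A} {δ : ℝ}
    (h : ∃ᶠ l : ℕ in atTop, δ * l ≤ #{i ∈ range l | y i ≠ a}) : δ ≤ feld (fun _ => a) y := by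
  refine le_limsup_of_frequently_le ((h.and_eventually (eventually_gt_atTop 0)).mono
    fun l ⟨hl, hl0⟩ => ?_) (isBoundedUnder_of ⟨1, fun l =>
      div_le_one_of_le₀ (levD_factor_zero_le _ _ l) l.cast_nonneg⟩)
  rw [le_div_iff₀ (by exact_mod_cast hl0)]
  exact hl.trans (card_ne_le_levD_const_factor_zero a y l)

end Feldman

lemma iterate_apply_eq_of_forall_add_eq {A : Type*} {F : (ℕ → A) → ℕ → A} {s : ℕ}
    {f : (Fin s → A) → A} (hf : ∀ x i, F x i = f fun k => x (i + k)) (t : ℕ) {x y : ℕ → A}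
    {i : ℕ} (h : ∀ j ≤ t * (s - 1), x (i + j) = y (i + j)) : F^[t] x i = F^[t] y i := by
  induction t generalizing i with
  | zero => simpa using h 0 (Nat.zero_le _)
  | succ t ih =>
    rw [Function.iterate_succ_apply', Function.iterate_succ_apply', hf, hf]
    congr 1
    funext k
    refine ih fun j hj => ?_
    have hk : (k : ℕ) ≤ s - 1 := Nat.le_sub_one_of_lt k.isLt
    have := h (k + j) (by rw [add_one_mul]; omega)
    rwa [← add_assoc] at this

def blocks (a b : ℕ) : Set ℕ := {i | ∃ n, a * 4 ^ n ≤ i ∧ i < b * 4 ^ n}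

section Blocks

open Classical

lemma sum_range_succ_four_pow_le (k : ℕ) : ∑ n ∈ range (k + 1), 4 ^ n ≤ 2 * 4 ^ k := by
  induction k with
  | zero => simp
  | succ k ih =>
    rw [sum_range_succ, pow_succ]
    omega

lemma mul_card_blocks_le (a b L : ℕ) : a * #{i ∈ range L | i ∈ blocks a b} ≤ 2 * (b - a) * L := by
  rcases Nat.eq_zero_or_pos a with rfl | ha
  · simp
  rcases lt_or_ge L a with hLa | haL
  · have hempty : {i ∈ range L | i ∈ blocks a b} = ∅ :=
      filter_eq_empty_iff.2 fun i hi ⟨n, hn, _⟩ => by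
        have := Nat.le_mul_of_pos_right a (by positivity : 0 < 4 ^ n)
        rw [mem_range] at hi
        omega
    simp [hempty]
  set K := Nat.log 4 (L / a)
  have hsub : {i ∈ range L | i ∈ blocks a b}
      ⊆ (range (K + 1)).biUnion fun n => Ico (a * 4 ^ n) (b * 4 ^ n) := by
    intro i hi
    obtain ⟨hiL, n, hlo, hhi⟩ := mem_filter.1 hi
    have hnK : n ≤ K := Nat.le_log_of_pow_le (by norm_num)
      ((Nat.le_div_iff_mul_le ha).2 (by rw [mem_range] at hiL; nlinarith))
    exact mem_biUnion.2 ⟨n, mem_range.2 (Nat.lt_succ_of_le hnK), mem_Ico.2 ⟨hlo, hhi⟩⟩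
  have hK : a * 4 ^ K ≤ L := calc
    a * 4 ^ K ≤ a * (L / a) := by gcongr; exact Nat.pow_log_le_self 4 (Nat.div_pos haL ha).ne'
    _ ≤ L := Nat.mul_div_le L a
  calc a * #{i ∈ range L | i ∈ blocks a b}
      ≤ a * ∑ n ∈ range (K + 1), #(Ico (a * 4 ^ n) (b * 4 ^ n)) := by
        gcongr
        exact (card_le_card hsub).trans card_biUnion_le
    _ = (b - a) * (a * ∑ n ∈ range (K + 1), 4 ^ n) := by
        simp only [Nat.card_Ico, ← Nat.sub_mul, ← mul_sum]
        ring
    _ ≤ (b - a) * (2 * L) :=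
        Nat.mul_le_mul_left _ (by nlinarith [sum_range_succ_four_pow_le K])
    _ = 2 * (b - a) * L := by ring

lemma card_blocks_ge (a b N : ℕ) : (b - a) * 4 ^ N ≤ #{i ∈ range (b * 4 ^ N) | i ∈ blocks a b} := by
  calc (b - a) * 4 ^ N = #(Ico (a * 4 ^ N) (b * 4 ^ N)) := by rw [Nat.card_Ico, Nat.sub_mul]
    _ ≤ _ := card_le_card fun i hi => by
      obtain ⟨hai, hib⟩ := mem_Ico.1 hi
      exact mem_filter.2 ⟨mem_range.2 hib, N, hai, hib⟩

lemma lt_mul_or_mem_blocks_of_add_mem {a b i j r : ℕ} (hj : j ≤ r)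
    (h : i + j ∈ blocks (a + 1) b) : i < b * r ∨ i ∈ blocks a b := by
  obtain ⟨n, hlo, hhi⟩ := h
  rcases le_or_gt (4 ^ n) r with hn | hn
  · exact Or.inl (by nlinarith)
  · exact Or.inr ⟨n, by nlinarith, by omega⟩

lemma card_iterate_ne_le {A : Type*} [DecidableEq A] {F : (ℕ → A) → ℕ → A} {s : ℕ}
    {f : (Fin s → A) → A} (hf : ∀ x i, F x i = f fun k => x (i + k)) (t : ℕ) {x y : ℕ → A}
    {a b : ℕ} (hxy : ∀ i, x i ≠ y i → i ∈ blocks (a + 1) b) (l : ℕ) :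
    #{i ∈ range l | F^[t] x i ≠ F^[t] y i}
      ≤ b * (t * (s - 1)) + #{i ∈ range l | i ∈ blocks a b} := by
  refine (card_le_card fun i hi => ?_).trans
    ((card_union_le (range (b * (t * (s - 1)))) {i ∈ range l | i ∈ blocks a b}).trans_eq (by rw [card_range]))
  obtain ⟨hil, hne⟩ := mem_filter.1 hi
  obtain ⟨j, hj, hxyj⟩ : ∃ j ≤ t * (s - 1), x (i + j) ≠ y (i + j) := by
    by_contra! hagree
    exact hne (iterate_apply_eq_of_forall_add_eq hf t hagree)
  rcases lt_mul_or_mem_blocks_of_add_mem hj (hxy _ hxyj) with hi' | hi'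
  · exact mem_union_left _ (mem_range.2 hi')
  · exact mem_union_right _ (mem_filter.2 ⟨hil, hi'⟩)

end Blocks

/-- There is no expansive cellular automaton on the Feldman space over the binary
alphabet: for every CA `F` and every `ε > 0` there are `x, y` with `𝔡_L(x,y) > 0` but
`𝔡_L(F^t(x), F^t(y)) ≤ ε` for all `t`. -/
theorem no_expansive_ca_feldman (F : (ℕ → Bool) → ℕ → Bool)
    (hCA : ∃ (s : ℕ) (f : (Fin s → Bool) → Bool), 1 ≤ s ∧
      ∀ (x : ℕ → Bool) (i : ℕ), F x i = f (fun k => x (i + k)))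
    (ε : ℝ) (hε : 0 < ε) :
    ∃ x y : ℕ → Bool, 0 < feld x y ∧ ∀ t : ℕ, feld (F^[t] x) (F^[t] y) ≤ ε := by
  classical
  obtain ⟨s, f, -, hf⟩ := hCA
  obtain ⟨M, hM⟩ := exists_nat_ge (8 / ε)
  have hεM : 8 ≤ ε * M := by rwa [div_le_iff₀ hε, mul_comm] at hM
  let y : ℕ → Bool := fun i => decide (i ∈ blocks (M + 1) (M + 2))
  have hy (i : ℕ) : y i ≠ false ↔ i ∈ blocks (M + 1) (M + 2) := by simp [y]
  refine ⟨fun _ => false, y, ?_, fun t => feld_le_of_eventually_card_ne_le ?_⟩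
  · refine (by positivity : (0 : ℝ) < 1 / (M + 2)).trans_le (le_feld_const_of_frequently ?_)
    refine frequently_atTop.2 fun N => ⟨(M + 2) * 4 ^ N, ?_, ?_⟩
    · exact (Nat.lt_pow_self (by norm_num)).le.trans (Nat.le_mul_of_pos_left _ (by omega))
    · have hN := card_blocks_ge (M + 1) (M + 2) N
      simp only [Nat.add_sub_add_left, Nat.reduceSub, one_mul] at hN
      simp_rw [hy]
      push_cast
      rw [one_div_mul_eq_div, mul_div_cancel_left₀ _ (by positivity)]
      exact_mod_cast hN
  · set r := t * (s - 1)
    filter_upwards [eventually_ge_atTop ⌈2 * (M + 2) * r / ε⌉₊] with l hl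
    have hl' : 2 * (M + 2) * r ≤ ε * l := by
      rw [← div_le_iff₀' hε]
      exact (Nat.ceil_le.1 hl).trans_eq (by ring)
    have hcard : (#{i ∈ range l | F^[t] (fun _ => false) i ≠ F^[t] y i} : ℝ)
        ≤ (M + 2) * r + #{i ∈ range l | i ∈ blocks M (M + 2)} := by
      exact_mod_cast card_iterate_ne_le hf t (fun i hi => (hy i).1 (Ne.symm hi)) l
    have hblocks : (M : ℝ) * #{i ∈ range l | i ∈ blocks M (M + 2)} ≤ 4 * l := by
      have := mul_card_blocks_le M (M + 2) l
      rw [Nat.add_sub_cancel_left] at this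
      exact_mod_cast this.trans_eq (by ring)
    nlinarith
end
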